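/- arXiv:1301.2171 — 2 statements merged into one kernel-verified Lean document; each statement's English description precedes it below -/
import Mathlib

section
/- Let Ω be a countably infinite set and let u, v, f ∈ Ω^Ω. If c(u) < ∞, d(u) = ∞, c(v) > 0, d(f) = d(v) = 0, and 0 < c(f) < ∞, then f belongs to the subsemigroup of Ω^Ω generated by S_{1,2,3,4,5} ∪ {u, v}. -/
/-!
Setting: `Ω` is a countably infinite set, `Function.End Ω = Ω → Ω` is the full
transformation semigroup (a subset is closed under composition in one order iff
it is closed in the other, so the lattice of subsemigroups is unaffected by the
left-to-right convention of the paper).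
-/

open Cardinal

/-- A transversal of `f`: a set on which `f` is injective and whose image is all of `Ωf`. -/
def IsTransversal {Ω : Type*} (f : Ω → Ω) (T : Set Ω) : Prop :=
  Set.InjOn f T ∧ f '' T = Set.range f

/-- The defect `d(f) = |Ω \ Ωf|`. -/
noncomputable def defect {Ω : Type*} (f : Ω → Ω) : Cardinal :=
  #((Set.range f)ᶜ : Set Ω)

/-- The collapse `c(f) = |Ω \ Σ|` for a transversal `Σ` of `f` (the value is
independent of the choice of transversal, so the infimum is the common value). -/
noncomputable def collapse {Ω : Type*} (f : Ω → Ω) : Cardinal :=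
  ⨅ T : {T : Set Ω // IsTransversal f T}, #(T.1ᶜ : Set Ω)

/-- The infinite contraction index `k(f) = |{α : αf⁻¹ infinite}|`. -/
noncomputable def contract {Ω : Type*} (f : Ω → Ω) : Cardinal :=
  #({α : Ω | (f ⁻¹' {α}).Infinite} : Set Ω)

def S1 {Ω : Type*} : Set (Function.End Ω) := {f | collapse f = 0 ∨ 0 < defect f}
def S2 {Ω : Type*} : Set (Function.End Ω) := {f | 0 < collapse f ∨ defect f = 0}
def S3 {Ω : Type*} : Set (Function.End Ω) := {f | collapse f < ℵ₀ ∨ ℵ₀ ≤ defect f}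
def S4 {Ω : Type*} : Set (Function.End Ω) := {f | ℵ₀ ≤ collapse f ∨ defect f < ℵ₀}
def S5 {Ω : Type*} : Set (Function.End Ω) := {f | contract f < ℵ₀}

/-- `Sym(Ω)`, the bijections of `Ω`. -/
def SymOmega {Ω : Type*} : Set (Function.End Ω) := {f | Function.Bijective f}

/-- `U = {f : d(f) = ∞ or 0 < c(f) < ∞} ∪ Sym(Ω)`. -/
def SetU {Ω : Type*} : Set (Function.End Ω) :=
  {f | ℵ₀ ≤ defect f ∨ (0 < collapse f ∧ collapse f < ℵ₀)} ∪ SymOmega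

/-- `V = {f : c(f) = ∞ or 0 < d(f) < ∞} ∪ Sym(Ω)`. -/
def SetV {Ω : Type*} : Set (Function.End Ω) :=
  {f | ℵ₀ ≤ collapse f ∨ (0 < defect f ∧ defect f < ℵ₀)} ∪ SymOmega

/-- `S_{1,2,3,4,5}`. -/
def S12345 {Ω : Type*} : Set (Function.End Ω) := S1 ∩ S2 ∩ S3 ∩ S4 ∩ S5

/-- The family `S_1, …, S_5` indexed by `Fin 5`. -/
def SS {Ω : Type*} : Fin 5 → Set (Function.End Ω) := ![S1, S2, S3, S4, S5]

/-!
A section `e` of the surjection `v`, with image a transversal of `v`, gives `f = v ∘ (e ∘ f)`;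
post-composing the surjection `f` with the injection `e` keeps `c(f)` and has defect
`d(e) = c(v) > 0`. If `c(v) < ∞` then `e ∘ f ∈ S_{1,2,3,4,5}`. Otherwise map `Ω` bijectively
onto a transversal of `u` minus one point by `s`: then `s ∘ f ∈ S_{1,2,3,4,5}`, and `u ∘ s` and
`e` are injections whose images both have countably infinite complement, so a permutation `σ`
satisfies `σ ∘ u ∘ s = e`, i.e. `e ∘ f = σ ∘ u ∘ (s ∘ f)`.
-/

open Set Function

section Invariants

variable {Ω : Type*}

theorem exists_isTransversal (f : Ω → Ω) : ∃ T, IsTransversal f T := by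
  choose σ hσ using fun y : range f => y.2
  refine ⟨range σ, ?_, (image_subset_range f _).antisymm ?_⟩
  · rintro _ ⟨y₁, rfl⟩ _ ⟨y₂, rfl⟩ h
    rw [hσ, hσ] at h
    rw [Subtype.ext h]
  · intro y hy
    exact ⟨σ ⟨y, hy⟩, mem_range_self _, hσ ⟨y, hy⟩⟩

theorem exists_isTransversal_mk_compl_eq_collapse (f : Ω → Ω) :
    ∃ T, IsTransversal f T ∧ #(Tᶜ : Set Ω) = collapse f := by
  obtain ⟨T₀, hT₀⟩ := exists_isTransversal f
  have : Nonempty {T : Set Ω // IsTransversal f T} := ⟨⟨T₀, hT₀⟩⟩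
  obtain ⟨T, hT⟩ := ciInf_mem fun T : {T : Set Ω // IsTransversal f T} => #(T.1ᶜ : Set Ω)
  exact ⟨T.1, T.2, hT⟩

theorem IsTransversal.exists_leftInverse_range_eq {v : Ω → Ω} {T : Set Ω}
    (hT : IsTransversal v T) (hv : Surjective v) :
    ∃ e : Ω → Ω, LeftInverse v e ∧ range e = T := by
  have hvT : ∀ y, ∃ t ∈ T, v t = y := fun y => by
    rw [← mem_image, hT.2, hv.range_eq]
    trivial
  choose e heT hve using hvT
  refine ⟨e, hve, (range_subset_iff.2 heT).antisymm fun t ht => ⟨v t, ?_⟩⟩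
  exact hT.1 (heT _) ht (hve _)

theorem isTransversal_comp_iff {f g : Ω → Ω} (hg : Injective g) (T : Set Ω) :
    IsTransversal (g ∘ f) T ↔ IsTransversal f T := by
  rw [IsTransversal, IsTransversal, image_comp, range_comp, image_eq_image hg]
  exact and_congr_left' ⟨InjOn.of_comp, hg.comp_injOn⟩

theorem collapse_comp_of_injective {f g : Ω → Ω} (hg : Injective g) :
    collapse (g ∘ f) = collapse f := by
  have : IsTransversal (g ∘ f) = IsTransversal f :=
    funext fun T => propext (isTransversal_comp_iff hg T)
  rw [collapse, collapse, this]

theorem collapse_eq_zero_of_injective {f : Ω → Ω} (hf : Injective f) : collapse f = 0 := by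
  have hT : IsTransversal f univ := ⟨hf.injOn, image_univ⟩
  refine nonpos_iff_eq_zero.1 ((ciInf_le' _ (⟨univ, hT⟩ : {T // IsTransversal f T})).trans_eq ?_)
  simp

theorem defect_eq_zero_iff_surjective {f : Ω → Ω} : defect f = 0 ↔ Surjective f := by
  rw [defect, mk_eq_zero_iff, isEmpty_coe_sort, compl_empty_iff, range_eq_univ]

theorem defect_comp_of_surjective {e f : Ω → Ω} (hf : Surjective f) :
    defect (e ∘ f) = defect e := by
  rw [defect, defect, range_comp, hf.range_eq, image_univ]

theorem defect_le_defect_comp (g h : Ω → Ω) : defect g ≤ defect (g ∘ h) :=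
  mk_le_mk_of_subset (compl_subset_compl.2 (range_comp_subset_range h g))

theorem contract_eq_zero_of_collapse_lt_aleph0 {f : Ω → Ω} (hf : collapse f < ℵ₀) :
    contract f = 0 := by
  obtain ⟨T, hT, hTc⟩ := exists_isTransversal_mk_compl_eq_collapse f
  have hTfin : (Tᶜ : Set Ω).Finite := lt_aleph0_iff_set_finite.1 (hTc ▸ hf)
  suffices ∀ α, (f ⁻¹' {α}).Finite by simp [contract, this]
  intro α
  have hsub : f ⁻¹' {α} ⊆ Tᶜ ∪ (f ⁻¹' {α} ∩ T) := fun x hx => by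
    by_cases hxT : x ∈ T
    · exact Or.inr ⟨hx, hxT⟩
    · exact Or.inl hxT
  have hss : (f ⁻¹' {α} ∩ T).Subsingleton := fun a ha b hb =>
    hT.1 ha.2 hb.2 (ha.1.trans hb.1.symm)
  exact (hTfin.union hss.finite).subset hsub

theorem contract_lt_aleph0_of_collapse_lt_aleph0 {f : Ω → Ω} (hf : collapse f < ℵ₀) :
    contract f < ℵ₀ :=
  contract_eq_zero_of_collapse_lt_aleph0 hf ▸ aleph0_pos

end Invariants

section Membership

variable {Ω : Type*}

theorem mem_S12345_of_bijective {w : Function.End Ω} (hw : Bijective w) :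
    w ∈ (S12345 : Set (Function.End Ω)) := by
  have hc : collapse w = 0 := collapse_eq_zero_of_injective hw.injective
  have hd : defect w = 0 := defect_eq_zero_iff_surjective.2 hw.surjective
  have hc' : collapse w < ℵ₀ := hc ▸ aleph0_pos
  exact ⟨⟨⟨⟨.inl hc, .inr hd⟩, .inl hc'⟩, .inr (hd ▸ aleph0_pos)⟩,
    contract_lt_aleph0_of_collapse_lt_aleph0 hc'⟩

theorem mem_S12345_of_finite_pos {w : Function.End Ω}
    (hc₀ : 0 < collapse w) (hc : collapse w < ℵ₀) (hd₀ : 0 < defect w) (hd : defect w < ℵ₀) :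
    w ∈ (S12345 : Set (Function.End Ω)) :=
  ⟨⟨⟨⟨.inr hd₀, .inl hc₀⟩, .inl hc⟩, .inr hd⟩, contract_lt_aleph0_of_collapse_lt_aleph0 hc⟩

theorem comp_mem_S12345 {e f : Ω → Ω} (he : Injective e) (hf : Surjective f)
    (hc₀ : 0 < collapse f) (hc : collapse f < ℵ₀) (hd₀ : 0 < defect e) (hd : defect e < ℵ₀) :
    e ∘ f ∈ (S12345 : Set (Function.End Ω)) := by
  apply mem_S12345_of_finite_pos <;>
    simpa only [collapse_comp_of_injective he, defect_comp_of_surjective hf]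

end Membership

theorem exists_injective_range_eq {α β : Type*} [Countable α] [Infinite α] [Countable β]
    {T : Set β} (hT : T.Infinite) : ∃ e : α → β, Injective e ∧ range e = T := by
  have := hT.to_subtype
  obtain ⟨E⟩ := nonempty_equiv_of_countable (α := α) (β := T)
  exact ⟨(↑) ∘ E, Subtype.val_injective.comp E.injective, by simp [range_comp]⟩

theorem exists_equiv_comp_eq {α β : Type*} {g h : α → β} (hg : Injective g) (hh : Injective h)
    (hgh : #((range g)ᶜ : Set β) = #((range h)ᶜ : Set β)) : ∃ σ : β ≃ β, σ ∘ g = h := by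
  let F : range g ↪ β := (Equiv.ofInjective g hg).symm.toEmbedding.trans ⟨h, hh⟩
  have hF : range F = range h := by
    simp [F, range_comp]
  obtain ⟨σ, hσ⟩ := extend_function F (Cardinal.eq.1 (hF ▸ hgh))
  refine ⟨σ, funext fun x => ?_⟩
  simpa [F] using hσ ⟨g x, x, rfl⟩

namespace Subsemigroup

theorem comp_mem {α : Type*} {S : Subsemigroup (Function.End α)} {g h : α → α}
    (hg : g ∈ S) (hh : h ∈ S) : g ∘ h ∈ S :=
  S.mul_mem hg hh

end Subsemigroup

theorem comp_mem_closure_of_aleph0_le_defect {Ω : Type*} [Countable Ω] {u e f : Function.End Ω}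
    (hcu : collapse u < ℵ₀) (hdu : ℵ₀ ≤ defect u) (he : Injective e) (hde : ℵ₀ ≤ defect e)
    (hf : Surjective f) (hc₀ : 0 < collapse f) (hc : collapse f < ℵ₀) :
    e ∘ f ∈ Subsemigroup.closure (S12345 ∪ {u}) := by
  have : Infinite Ω := infinite_iff.2 (hdu.trans (mk_set_le _))
  obtain ⟨T, hT, hTc⟩ := exists_isTransversal_mk_compl_eq_collapse u
  have hTfin : (Tᶜ : Set Ω).Finite := lt_aleph0_iff_set_finite.1 (hTc ▸ hcu)
  have hTinf : T.Infinite := compl_compl T ▸ hTfin.infinite_compl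
  obtain ⟨p, hp⟩ := hTinf.nonempty
  obtain ⟨s, hs, hrs⟩ := exists_injective_range_eq (α := Ω) (hTinf.sdiff (finite_singleton p))
  have hrs_compl : (range s)ᶜ = {p} ∪ Tᶜ := by rw [hrs, compl_sdiff]
  have hds₀ : 0 < defect s := by
    rw [defect, hrs_compl, pos_iff_ne_zero, mk_ne_zero_iff]
    exact ⟨⟨p, .inl rfl⟩⟩
  have hds : defect s < ℵ₀ := by
    rw [defect, hrs_compl, lt_aleph0_iff_set_finite]
    exact (finite_singleton p).union hTfin
  have hsT : ∀ x, s x ∈ T := fun x => (hrs.subset (mem_range_self x)).1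
  have hus : Injective (u ∘ s) := fun a b hab => hs (hT.1 (hsT a) (hsT b) hab)
  have hdus : defect (u ∘ s) = defect e :=
    (mk_le_aleph0.antisymm (hdu.trans (defect_le_defect_comp u s))).trans
      (hde.antisymm mk_le_aleph0)
  obtain ⟨σ, hσ⟩ := exists_equiv_comp_eq hus he hdus
  have hfac : e ∘ f = σ ∘ (u ∘ (s ∘ f)) := by
    rw [← hσ]
    rfl
  rw [hfac]
  have hσ_mem : ⇑σ ∈ S12345 := mem_S12345_of_bijective σ.bijective
  have hsf : s ∘ f ∈ S12345 := comp_mem_S12345 hs hf hc₀ hc hds₀ hds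
  exact Subsemigroup.comp_mem (Subsemigroup.subset_closure (.inl hσ_mem))
    (Subsemigroup.comp_mem (Subsemigroup.subset_closure (.inr rfl))
      (Subsemigroup.subset_closure (.inl hsf)))

theorem stmt4_general (Ω : Type) [Countable Ω] (u v f : Function.End Ω)
    (hcu : collapse u < ℵ₀) (hdu : ℵ₀ ≤ defect u)
    (hcv : 0 < collapse v) (hdf : defect f = 0) (hdv : defect v = 0)
    (hcf : 0 < collapse f) (hcf' : collapse f < ℵ₀) :
    f ∈ Subsemigroup.closure (S12345 ∪ {u, v}) := by
  have hf : Surjective f := defect_eq_zero_iff_surjective.1 hdf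
  obtain ⟨T, hT, hTc⟩ := exists_isTransversal_mk_compl_eq_collapse v
  obtain ⟨e, hve, hre⟩ := hT.exists_leftInverse_range_eq (defect_eq_zero_iff_surjective.1 hdv)
  have hde : defect e = collapse v := by rw [defect, hre, hTc]
  have hef : e ∘ f ∈ Subsemigroup.closure (S12345 ∪ {u, v}) := by
    rcases lt_or_ge (defect e) ℵ₀ with hfin | hinf
    · exact Subsemigroup.subset_closure
        (.inl (comp_mem_S12345 hve.injective hf hcf hcf' (hde ▸ hcv) hfin))
    · exact Subsemigroup.closure_mono (M := Function.End Ω)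
        (union_subset_union_right _ (by simp))
        (comp_mem_closure_of_aleph0_le_defect hcu hdu hve.injective hinf hf hcf hcf')
  have hfac : f = v ∘ (e ∘ f) := funext fun x => (hve (f x)).symm
  rw [hfac]
  exact Subsemigroup.comp_mem (Subsemigroup.subset_closure (.inr (by simp))) hef

theorem stmt4 (Ω : Type) [Countable Ω] [Infinite Ω] (u v f : Function.End Ω)
    (hcu : collapse u < ℵ₀) (hdu : ℵ₀ ≤ defect u)
    (hcv : 0 < collapse v) (hdf : defect f = 0) (hdv : defect v = 0)
    (hcf : 0 < collapse f) (hcf' : collapse f < ℵ₀) :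
    f ∈ Subsemigroup.closure (S12345 ∪ {u, v}) :=
  stmt4_general Ω u v f hcu hdu hcv hdf hdv hcf hcf'
end

section
/- Let Ω be a countably infinite set and let u, f ∈ Ω^Ω. If k(u) = k(f) = ∞ and d(f) = ∞, then f belongs to the subsemigroup of Ω^Ω generated by S_{1,2,3,4,5} ∪ {u}. -/
/-!
Setting: `Ω` is a countably infinite set, `Function.End Ω = Ω → Ω` is the full
transformation semigroup (a subset is closed under composition in one order iff
it is closed in the other, so the lattice of subsemigroups is unaffected by the
left-to-right convention of the paper).
-/

open Cardinal

/-!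
Write `K` for the set of points whose `u`-fibre is infinite; it is infinite. Embed `Ω` into `K` by
an injection `κ` leaving infinitely many points of `K` unused, and let `b` send `x` into the
`u`-fibre over `κ (f x)`, injectively except that one infinite fibre of `f` is collapsed to a
point. Then `u ∘ b = κ ∘ f`, and `f = a ∘ u ∘ b` where `a` inverts `κ` on `κ (range f)` and sends
everything else into `range f`. The unused part of `K` gives `a` and `b` infinite defect and
infinite collapse, while each of them has at most one infinite fibre, so `a, b ∈ S_{1,2,3,4,5}`.
-/

open Function Set

variable {Ω : Type*}

theorem aleph0_le_defect_iff {g : Ω → Ω} : ℵ₀ ≤ defect g ↔ (range g)ᶜ.Infinite := by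
  rw [defect, aleph0_le_mk_iff, infinite_coe_iff]

theorem aleph0_le_contract_iff {g : Ω → Ω} :
    ℵ₀ ≤ contract g ↔ {α | (g ⁻¹' {α}).Infinite}.Infinite := by
  rw [contract, aleph0_le_mk_iff, infinite_coe_iff]

theorem contract_lt_aleph0_of_subset_singleton {g : Ω → Ω} {β : Ω}
    (h : {α | (g ⁻¹' {α}).Infinite} ⊆ {β}) : contract g < ℵ₀ :=
  lt_aleph0_iff_set_finite.2 ((finite_singleton β).subset h)

theorem aleph0_le_collapse_of_infinite_fiber {g : Ω → Ω} {β : Ω}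
    (hβ : (g ⁻¹' {β}).Infinite) : ℵ₀ ≤ collapse g := by
  obtain ⟨T, hT, hinj⟩ := exists_image_eq_and_injOn univ g
  have : Nonempty {T : Set Ω // IsTransversal g T} := ⟨⟨T, hinj, by rwa [image_univ] at hT⟩⟩
  refine le_ciInf fun T => aleph0_le_mk_iff.2 (infinite_coe_iff.2 ?_)
  have hmeet : (g ⁻¹' {β} ∩ T.1).Subsingleton := fun x hx y hy =>
    T.2.1 hx.2 hy.2 (hx.1.trans hy.1.symm)
  exact (hβ.sdiff hmeet.finite).mono fun x hx hxT => hx.2 ⟨hx.1, hxT⟩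

theorem mem_S12345_of_aleph0_le {g : Function.End Ω} (hc : ℵ₀ ≤ collapse g)
    (hd : ℵ₀ ≤ defect g) (hk : contract g < ℵ₀) : g ∈ S12345 :=
  ⟨⟨⟨⟨Or.inr (aleph0_pos.trans_le hd), Or.inl (aleph0_pos.trans_le hc)⟩, Or.inr hd⟩,
    Or.inl hc⟩, hk⟩

theorem Set.Infinite.exists_injective_range_subset (α : Type*) [Countable α] {β : Type*}
    {K : Set β} (hK : K.Infinite) :
    ∃ κ : α → β, Injective κ ∧ range κ ⊆ K ∧ (K \ range κ).Infinite := by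
  obtain ⟨n, hn⟩ := exists_injective_nat α
  let e := hK.natEmbedding
  have he : ∀ {i j}, (e i : β) = e j → i = j := fun h => e.injective (Subtype.ext h)
  refine ⟨fun a => e (2 * n a), fun a b h => hn (by have := he h; omega),
    range_subset_iff.2 fun a => (e _).2, ?_⟩
  refine infinite_of_injective_forall_mem (f := fun k : ℕ => (e (2 * k + 1) : β))
    (fun i j h => by have := he h; omega) fun k => ⟨(e _).2, ?_⟩
  rintro ⟨a, ha⟩
  have := he ha
  omega

section Factors

variable {u : Function.End Ω} {f κ : Ω → Ω} {lift : Ω → Ω → Ω} {x₀ x x' z : Ω}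

open Classical in
noncomputable def leftFactor (κ f : Ω → Ω) (x₀ : Ω) : Function.End Ω :=
  fun z => f (if h : z ∈ range (κ ∘ f) then h.choose else x₀)

open Classical in
noncomputable def rightFactor (f : Ω → Ω) (lift : Ω → Ω → Ω) (x₀ : Ω) : Function.End Ω :=
  fun x => if f x = f x₀ then lift (f x₀) x₀ else lift (f x) x

theorem leftFactor_apply_comp (hκ : Injective κ) (x : Ω) :
    leftFactor κ f x₀ (κ (f x)) = f x := by
  have h : κ (f x) ∈ range (κ ∘ f) := ⟨x, rfl⟩
  simp only [leftFactor, dif_pos h]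
  exact hκ h.choose_spec

theorem leftFactor_of_notMem_range (h : z ∉ range κ) : leftFactor κ f x₀ z = f x₀ := by
  simp only [leftFactor, dif_neg fun h' : z ∈ range (κ ∘ f) => h (range_comp_subset_range f κ h')]

theorem preimage_leftFactor_subset (hκ : Injective κ) {α : Ω} (hα : α ≠ f x₀) :
    leftFactor κ f x₀ ⁻¹' {α} ⊆ {κ α} := by
  intro z hz
  by_cases h : z ∈ range (κ ∘ f)
  · obtain ⟨x, rfl⟩ := h
    have : f x = α := (leftFactor_apply_comp hκ x).symm.trans hz
    exact congrArg κ this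
  · have hz : leftFactor κ f x₀ z = α := hz
    rw [leftFactor, dif_neg h] at hz
    exact absurd hz.symm hα

theorem leftFactor_mem_S12345 (hκ : Injective κ) (hκc : (range κ)ᶜ.Infinite)
    (hdf : (range f)ᶜ.Infinite) : leftFactor κ f x₀ ∈ S12345 := by
  refine mem_S12345_of_aleph0_le ?_ ?_ ?_
  · exact aleph0_le_collapse_of_infinite_fiber
      (hκc.mono fun z hz => leftFactor_of_notMem_range hz)
  · exact aleph0_le_defect_iff.2
      (hdf.mono (compl_subset_compl.2 (range_comp_subset_range _ f)))
  · refine contract_lt_aleph0_of_subset_singleton (β := f x₀) fun α hα => ?_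
    by_contra hne
    exact hα ((finite_singleton _).subset (preimage_leftFactor_subset hκ hne))

theorem preimage_subset_preimage_rightFactor :
    f ⁻¹' {f x₀} ⊆ rightFactor f lift x₀ ⁻¹' {rightFactor f lift x₀ x₀} :=
  fun x (hx : f x = f x₀) => by
    show rightFactor f lift x₀ x = rightFactor f lift x₀ x₀
    simp only [rightFactor, if_pos hx, if_true]

variable (hlift : ∀ y z, u (lift y z) = κ y)
include hlift

theorem apply_rightFactor (x : Ω) : u (rightFactor f lift x₀ x) = κ (f x) := by
  unfold rightFactor
  split_ifs with h
  · rw [hlift, h]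
  · rw [hlift]

theorem apply_eq_of_rightFactor_eq_of_ne (hκ : Injective κ) (hlift_inj : ∀ y, Injective (lift y))
    (h : rightFactor f lift x₀ x = rightFactor f lift x₀ x') (hne : x ≠ x') : f x = f x₀ := by
  have hf : f x = f x' := hκ (by rw [← apply_rightFactor hlift, h, apply_rightFactor hlift])
  by_contra hx
  have hx' : f x' ≠ f x₀ := hf ▸ hx
  simp only [rightFactor, if_neg hx, if_neg hx', hf] at h
  exact hne (hlift_inj _ h)

theorem rightFactor_mem_S12345 (hκ : Injective κ) (hlift_inj : ∀ y, Injective (lift y))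
    (hx₀ : (f ⁻¹' {f x₀}).Infinite) {β : Ω} (hβ : β ∉ range κ) (huβ : (u ⁻¹' {β}).Infinite) :
    rightFactor f lift x₀ ∈ S12345 := by
  have hfiber := preimage_subset_preimage_rightFactor (f := f) (lift := lift) (x₀ := x₀)
  refine mem_S12345_of_aleph0_le (aleph0_le_collapse_of_infinite_fiber (hx₀.mono hfiber)) ?_ ?_
  · refine aleph0_le_defect_iff.2 (huβ.mono ?_)
    rintro z hz ⟨x, rfl⟩
    exact hβ ⟨f x, ((apply_rightFactor hlift x).symm.trans hz)⟩
  · refine contract_lt_aleph0_of_subset_singleton (β := rightFactor f lift x₀ x₀) fun α hα => ?_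
    obtain ⟨x, hx, x', hx', hne⟩ := hα.nontrivial
    exact hx.symm.trans
      (hfiber (apply_eq_of_rightFactor_eq_of_ne hlift hκ hlift_inj (hx.trans hx'.symm) hne))

theorem leftFactor_mul_mul_rightFactor (hκ : Injective κ) :
    leftFactor κ f x₀ * u * rightFactor f lift x₀ = f :=
  funext fun x => (congrArg _ (apply_rightFactor hlift x)).trans (leftFactor_apply_comp hκ x)

end Factors

theorem exists_mem_S12345_mul_mul_eq [Countable Ω] {u f : Function.End Ω}
    (hu : {α | (u ⁻¹' {α}).Infinite}.Infinite) {x₀ : Ω} (hx₀ : (f ⁻¹' {f x₀}).Infinite)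
    (hdf : (range f)ᶜ.Infinite) : ∃ a ∈ S12345, ∃ b ∈ S12345, a * u * b = f := by
  obtain ⟨κ, hκ, hκK, hK⟩ := hu.exists_injective_range_subset Ω
  obtain ⟨n, hn⟩ := exists_injective_nat Ω
  have hfib : ∀ y, (u ⁻¹' {κ y}).Infinite := fun y => hκK ⟨y, rfl⟩
  let lift y z : Ω := (hfib y).natEmbedding _ (n z)
  have hlift : ∀ y z, u (lift y z) = κ y := fun y z => ((hfib y).natEmbedding _ (n z)).2
  have hlift_inj : ∀ y, Injective (lift y) := fun y =>
    Subtype.val_injective.comp (((hfib y).natEmbedding _).injective.comp hn)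
  obtain ⟨β, hβK, hβ⟩ := hK.nonempty
  exact ⟨_, leftFactor_mem_S12345 (x₀ := x₀) hκ (hK.mono fun _ h => h.2) hdf,
    _, rightFactor_mem_S12345 hlift hκ hlift_inj hx₀ hβ hβK,
    leftFactor_mul_mul_rightFactor hlift hκ⟩

theorem stmt11_general (Ω : Type) [Countable Ω] (u f : Function.End Ω)
    (hku : ℵ₀ ≤ contract u) (hkf : ℵ₀ ≤ contract f) (hdf : ℵ₀ ≤ defect f) :
    f ∈ Subsemigroup.closure (S12345 ∪ {u}) := by
  obtain ⟨y₀, hy₀⟩ := (aleph0_le_contract_iff.1 hkf).nonempty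
  obtain ⟨x₀, rfl⟩ : ∃ x₀, f x₀ = y₀ := hy₀.nonempty
  obtain ⟨a, ha, b, hb, rfl⟩ :=
    exists_mem_S12345_mul_mul_eq (aleph0_le_contract_iff.1 hku) hy₀ (aleph0_le_defect_iff.1 hdf)
  have mem : ∀ g ∈ S12345 ∪ {u}, g ∈ Subsemigroup.closure (S12345 ∪ {u}) :=
    fun g hg => Subsemigroup.subset_closure hg
  exact mul_mem (mul_mem (mem a (Or.inl ha)) (mem u (Or.inr rfl))) (mem b (Or.inl hb))

theorem stmt11 (Ω : Type) [Countable Ω] [Infinite Ω] (u f : Function.End Ω)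
    (hku : ℵ₀ ≤ contract u) (hkf : ℵ₀ ≤ contract f) (hdf : ℵ₀ ≤ defect f) :
    f ∈ Subsemigroup.closure (S12345 ∪ {u}) :=
  stmt11_general Ω u f hku hkf hdf
end
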